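/- arXiv:2208.13076 — 2 statements merged into one kernel-verified Lean document; each statement's English description precedes it below -/
import Mathlib

section
/- Let V and Q be finite-dimensional real inner product spaces, a : V × V → ℝ bilinear and coercive with constant κ > 0, b : V × Q → ℝ bilinear satisfying the inf-sup condition with constant α > 0, and f : V → ℝ linear. Then there exists a (unique) solution (u,p) ∈ V × Q of the saddle point system a(u,v) − b(v,p) = f(v) for all v ∈ V and b(u,q) = 0 for all q ∈ Q. -/
/-!
Write the system as one linear map `(u, p) ↦ (a u - b(·, p), b u)` from `V × Q` to
`V* × Q*`. If it sends `(u, p)` to zero, then `b(u, ·) = 0`, so coercivity gives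
`κ‖u‖² ≤ a(u, u) = b(u, p) = 0`; hence `u = 0`, then `b(·, p) = 0` and the inf-sup condition
forces `p = 0`. An injective linear map between spaces of equal finite dimension is surjective,
so `(f, 0)` has a preimage.
-/

open Module

section Algebraic

variable {K V Q : Type*} [Field K] [AddCommGroup V] [Module K V] [AddCommGroup Q] [Module K Q]

def saddlePointOperator (a : V →ₗ[K] V →ₗ[K] K) (b : V →ₗ[K] Q →ₗ[K] K) :
    V × Q →ₗ[K] Dual K V × Dual K Q :=
  (a ∘ₗ LinearMap.fst K V Q - b.flip ∘ₗ LinearMap.snd K V Q).prod (b ∘ₗ LinearMap.fst K V Q)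

variable (a : V →ₗ[K] V →ₗ[K] K) (b : V →ₗ[K] Q →ₗ[K] K)

theorem saddlePointOperator_apply_eq_iff (u : V) (p : Q) (f : Dual K V) (g : Dual K Q) :
    saddlePointOperator a b (u, p) = (f, g) ↔ (∀ v, a u v - b v p = f v) ∧ ∀ q, b u q = g q := by
  simp [saddlePointOperator, Prod.ext_iff, LinearMap.ext_iff]

theorem saddlePointOperator_injective
    (ha : ∀ u, (∀ q, b u q = 0) → a u u = 0 → u = 0)
    (hb : ∀ p, (∀ v, b v p = 0) → p = 0) :
    Function.Injective (saddlePointOperator a b) := by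
  rw [← LinearMap.ker_eq_bot, Submodule.eq_bot_iff]
  rintro ⟨u, p⟩ hup
  obtain ⟨hau, hbu⟩ := (saddlePointOperator_apply_eq_iff a b u p 0 0).1 hup
  have hu : u = 0 := ha u (by simpa using hbu) (by simpa [hbu p] using hau u)
  have hp : p = 0 := hb p fun v => by simpa [hu] using hau v
  simp [hu, hp]

theorem saddlePointOperator_surjective [FiniteDimensional K V] [FiniteDimensional K Q]
    (ha : ∀ u, (∀ q, b u q = 0) → a u u = 0 → u = 0)
    (hb : ∀ p, (∀ v, b v p = 0) → p = 0) :
    Function.Surjective (saddlePointOperator a b) :=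
  (LinearMap.injective_iff_surjective_of_finrank_eq_finrank
    (by simp [finrank_prod])).1 (saddlePointOperator_injective a b ha hb)

end Algebraic

section Normed

variable {V Q : Type*} [NormedAddCommGroup V] [Module ℝ V] [NormedAddCommGroup Q] [Module ℝ Q]

theorem eq_zero_of_coercive {a : V →ₗ[ℝ] V →ₗ[ℝ] ℝ} {κ : ℝ} (hκ : 0 < κ)
    (hcoer : ∀ v : V, κ * ‖v‖ ^ 2 ≤ a v v) {u : V} (hu : a u u = 0) : u = 0 := by
  have : κ * ‖u‖ ^ 2 ≤ 0 := hu ▸ hcoer u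
  have : ‖u‖ ^ 2 ≤ 0 := nonpos_of_mul_nonpos_right this hκ
  simpa using this

theorem eq_zero_of_infSup {b : V →ₗ[ℝ] Q →ₗ[ℝ] ℝ} {α : ℝ} (hα : 0 < α)
    (hinfsup : ∀ q : Q, α * ‖q‖ ≤ ⨆ v : {v : V // v ≠ 0}, b v q / ‖(v : V)‖)
    {p : Q} (hp : ∀ v, b v p = 0) : p = 0 := by
  -- an empty supremum of reals is `0` as well
  have hsup : (⨆ v : {v : V // v ≠ 0}, b v p / ‖(v : V)‖) = 0 := by
    simp [hp, Real.iSup_const_zero]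
  have : α * ‖p‖ ≤ 0 := hsup ▸ hinfsup p
  simpa using nonpos_of_mul_nonpos_right this hα

end Normed

/-- Existence for the abstract saddle point system: in finite dimensions,
coercivity of `a` and the inf-sup condition on `b` imply existence of a
solution of the saddle point system. -/
theorem saddle_point_existence
    {V Q : Type*}
    [NormedAddCommGroup V] [InnerProductSpace ℝ V] [FiniteDimensional ℝ V]
    [NormedAddCommGroup Q] [InnerProductSpace ℝ Q] [FiniteDimensional ℝ Q]
    (a : V →ₗ[ℝ] V →ₗ[ℝ] ℝ) (b : V →ₗ[ℝ] Q →ₗ[ℝ] ℝ)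
    (κ : ℝ) (hκ : 0 < κ) (hcoer : ∀ v : V, κ * ‖v‖ ^ 2 ≤ a v v)
    (α : ℝ) (hα : 0 < α)
    (hinfsup : ∀ q : Q, α * ‖q‖ ≤ ⨆ v : {v : V // v ≠ 0}, b v q / ‖(v : V)‖)
    (f : V →ₗ[ℝ] ℝ) :
    ∃ (u : V) (p : Q), (∀ v : V, a u v - b v p = f v) ∧ (∀ q : Q, b u q = 0) := by
  obtain ⟨⟨u, p⟩, hup⟩ := saddlePointOperator_surjective a b
    (fun _ _ hu => eq_zero_of_coercive hκ hcoer hu)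
    (fun _ hp => eq_zero_of_infSup hα hinfsup hp) (f, 0)
  exact ⟨u, p, by simpa using (saddlePointOperator_apply_eq_iff a b u p f 0).1 hup⟩
end

section
/- Let V, Q be finite-dimensional real inner product spaces and b : V × Q → ℝ bilinear with inf-sup constant α > 0 (for all q ∈ Q, sup_{v≠0} b(v,q)/‖v‖ ≥ α‖q‖). Let a, a^D be bilinear forms on V, both coercive with constants κ₁ν, κ₁^Dν and continuous with constants κ₂ν, κ₂^Dν respectively. Given u ∈ V̂ ⊇ V (a larger inner product space to which a and the norms extend) and two discrete solutions: (u_h, p_h) solving a(u_h,v) − b(v,p_h) = F(v), b(u_h,q) = 0, and (u_h^D, p_h^D) solving a^D(u_h^D,v) − b(v,p_h^D) = F(v), b(u_h^D,q) = 0, for the same functional F. Then ‖p_h − p_h^D‖ ≤ (1/α)·(κ₂ν‖u_h − u_h^D‖ + sup_{v≠0} |a(u_h^D,v) − a^D(u_h^D,v)|/‖v‖). -/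
/-- Stability comparison between the PR-EG and PPR-EG solutions: the inf-sup
condition gives
`‖p_h − p_h^D‖ ≤ (1/α)(κ₂ν‖u_h − u_h^D‖ + sup_{v≠0} |a(u_h^D,v) − a^D(u_h^D,v)|/‖v‖)`. -/
theorem perturbed_solution_pressure_comparison
    {V Q : Type*}
    [NormedAddCommGroup V] [InnerProductSpace ℝ V] [FiniteDimensional ℝ V]
    [NormedAddCommGroup Q] [InnerProductSpace ℝ Q] [FiniteDimensional ℝ Q]
    (a aD : V →ₗ[ℝ] V →ₗ[ℝ] ℝ) (b : V →ₗ[ℝ] Q →ₗ[ℝ] ℝ)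
    (ν κ₁ κ₂ κ₁D κ₂D : ℝ) (hν : 0 < ν)
    (hκ₁ : 0 < κ₁) (hκ₂ : 0 < κ₂) (hκ₁D : 0 < κ₁D) (hκ₂D : 0 < κ₂D)
    (hacoer : ∀ v : V, κ₁ * ν * ‖v‖ ^ 2 ≤ a v v)
    (hacont : ∀ v w : V, |a v w| ≤ κ₂ * ν * ‖v‖ * ‖w‖)
    (haDcoer : ∀ v : V, κ₁D * ν * ‖v‖ ^ 2 ≤ aD v v)
    (haDcont : ∀ v w : V, |aD v w| ≤ κ₂D * ν * ‖v‖ * ‖w‖)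
    (α : ℝ) (hα : 0 < α)
    (hinfsup : ∀ q : Q, α * ‖q‖ ≤ ⨆ v : {v : V // v ≠ 0}, b v q / ‖(v : V)‖)
    (F : V →ₗ[ℝ] ℝ)
    (uh uhD : V) (ph phD : Q)
    (h1a : ∀ v : V, a uh v - b v ph = F v) (h1b : ∀ q : Q, b uh q = 0)
    (h2a : ∀ v : V, aD uhD v - b v phD = F v) (h2b : ∀ q : Q, b uhD q = 0) :
    ‖ph - phD‖ ≤ (1 / α) *
      (κ₂ * ν * ‖uh - uhD‖ +
        ⨆ v : {v : V // v ≠ 0}, |a uhD v - aD uhD v| / ‖(v : V)‖) := by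
  set S : ℝ := ⨆ v : {v : V // v ≠ 0}, |a uhD v - aD uhD v| / ‖(v : V)‖ with hS
  have hbdd : BddAbove (Set.range fun v : {v : V // v ≠ 0} =>
      |a uhD v - aD uhD v| / ‖(v : V)‖) := by
    refine ⟨(κ₂ * ν + κ₂D * ν) * ‖uhD‖, ?_⟩
    rintro x ⟨⟨v, hv⟩, rfl⟩
    have hvpos : (0 : ℝ) < ‖v‖ := norm_pos_iff.mpr hv
    rw [div_le_iff₀ hvpos]
    calc |a uhD v - aD uhD v| ≤ |a uhD v| + |aD uhD v| := abs_sub _ _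
      _ ≤ κ₂ * ν * ‖uhD‖ * ‖v‖ + κ₂D * ν * ‖uhD‖ * ‖v‖ :=
          add_le_add (hacont _ _) (haDcont _ _)
      _ = (κ₂ * ν + κ₂D * ν) * ‖uhD‖ * ‖v‖ := by ring
  have hSnonneg : 0 ≤ S := by
    apply Real.iSup_nonneg
    rintro ⟨v, hv⟩
    positivity
  have hC : 0 ≤ κ₂ * ν * ‖uh - uhD‖ + S := by positivity
  have key : α * ‖ph - phD‖ ≤ κ₂ * ν * ‖uh - uhD‖ + S := by
    refine le_trans (hinfsup (ph - phD)) (Real.iSup_le ?_ hC)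
    rintro ⟨v, hv⟩
    have hvpos : (0 : ℝ) < ‖v‖ := norm_pos_iff.mpr hv
    have hbv : b v (ph - phD) = a (uh - uhD) v + (a uhD v - aD uhD v) := by
      have e1 := h1a v
      have e2 := h2a v
      simp only [map_sub, LinearMap.sub_apply]
      linarith
    have h1 : b v (ph - phD) ≤ κ₂ * ν * ‖uh - uhD‖ * ‖v‖ + |a uhD v - aD uhD v| := by
      rw [hbv]
      have := le_abs_self (a (uh - uhD) v + (a uhD v - aD uhD v))
      have h2 := abs_add_le (a (uh - uhD) v) (a uhD v - aD uhD v)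
      have h3 := hacont (uh - uhD) v
      linarith [le_abs_self (a (uh - uhD) v)]
    have hle : |a uhD v - aD uhD v| / ‖v‖ ≤ S :=
      le_ciSup hbdd (⟨v, hv⟩ : {v : V // v ≠ 0})
    rw [div_le_iff₀ hvpos]
    have : |a uhD v - aD uhD v| ≤ S * ‖v‖ := by
      rwa [div_le_iff₀ hvpos] at hle
    calc b v (ph - phD) ≤ κ₂ * ν * ‖uh - uhD‖ * ‖v‖ + |a uhD v - aD uhD v| := h1
      _ ≤ κ₂ * ν * ‖uh - uhD‖ * ‖v‖ + S * ‖v‖ := by linarith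
      _ = (κ₂ * ν * ‖uh - uhD‖ + S) * ‖v‖ := by ring
  rw [one_div, inv_mul_eq_div, le_div_iff₀ hα]
  linarith
end
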